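/- Let G = (V, E) be a cubic graph with V = {v_1,…,v_n} and E = {e_1,…,e_m}, and for each vertex v_i let E_i be the set of three edges incident to v_i. Construct the CAPR instance I with lexicographic preferences as follows: applicants a_1,…,a_n, one per vertex, each of capacity 4; courses V ∪ E, each of capacity 1; the preference list of a_i consists of v_i followed by the three courses of E_i in some fixed order; the prerequisites, identical for all applicants, are v_i → e for every vertex v_i and every edge e ∈ E_i. Then, for every positive integer K, the graph G has an independent set of size at least K if and only if I admits a Pareto optimal matching of cardinality at least m + K. -/

import Mathlib

open Finset

def bundle {A C : Type*} [DecidableEq A] [DecidableEq C]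
    (M : Finset (A × C)) (a : A) : Finset C :=
  (M.filter fun p => p.1 = a).image Prod.snd

def slots {A C : Type*} [DecidableEq C] (M : Finset (A × C)) (c : C) : ℕ :=
  (M.filter fun p => p.2 = c).card

/-- Lexicographic comparison of bundles w.r.t. a preference list (earlier = better):
the most preferred course in the symmetric difference belongs to `S₁`. -/
def lexPrefers {C : Type*} [DecidableEq C] (l : List C) (S₁ S₂ : Finset C) : Prop :=
  ∃ c ∈ S₁ \ S₂, ∀ d ∈ (S₁ \ S₂) ∪ (S₂ \ S₁), l.idxOf c ≤ l.idxOf d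

def IsFeasible {A C : Type*} (pref : A → List C) (qA : A → ℕ)
    (prereq : A → C → C → Prop) (a : A) (S : Finset C) : Prop :=
  (∀ c ∈ S, c ∈ pref a) ∧ S.card ≤ qA a ∧
    ∀ c ∈ S, ∀ c', prereq a c c' → c' ∈ S

def IsMatching {A C : Type*} [DecidableEq A] [DecidableEq C]
    (pref : A → List C) (qA : A → ℕ) (qC : C → ℕ)
    (prereq : A → C → C → Prop) (M : Finset (A × C)) : Prop :=
  (∀ a, IsFeasible pref qA prereq a (bundle M a)) ∧ ∀ c, slots M c ≤ qC c

def Dominates {A C : Type*} [DecidableEq A] [DecidableEq C]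
    (pref : A → List C) (M' M : Finset (A × C)) : Prop :=
  (∃ a, lexPrefers (pref a) (bundle M' a) (bundle M a)) ∧
    ∀ a, ¬ lexPrefers (pref a) (bundle M a) (bundle M' a)

def ParetoOptimal {A C : Type*} [DecidableEq A] [DecidableEq C]
    (pref : A → List C) (qA : A → ℕ) (qC : C → ℕ)
    (prereq : A → C → C → Prop) (M : Finset (A × C)) : Prop :=
  IsMatching pref qA qC prereq M ∧
    ∀ M', IsMatching pref qA qC prereq M' → ¬ Dominates pref M' M

/-- Vertex `v` is incident to the edge `e_j` (whose endpoints are given by `ep`). -/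
def Incid {n m : ℕ} (ep : Fin m → Fin n × Fin n) (v : Fin n) (j : Fin m) : Prop :=
  v = (ep j).1 ∨ v = (ep j).2

instance {n m : ℕ} (ep : Fin m → Fin n × Fin n) (v : Fin n) (j : Fin m) :
    Decidable (Incid ep v j) := by unfold Incid; infer_instance

/-!
An independent set `S` gives a matching with `m + |S|` pairs: each `a_v` with `v ∈ S` takes `v`
and its three edges, and every other edge goes to one of its endpoints. Lexicographic preference
over a list is the colex order on list positions, a linear order, so among the finitely many
matchings that are weakly better for everybody a maximal one exists, and it is Pareto optimal.
It still gives every `v ∈ S` her whole list, which no bundle beats, and it leaves no edge course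
unassigned: such a course could be added to an endpoint's bundle, because edge courses have no
prerequisites and the capacity `4` equals the length of every list.

Conversely, in any matching only `a_v` can hold the course `v`, and then she holds all edges at
`v`; since edge courses have capacity `1`, the vertices holding their own course form an
independent set `T`, and the matching has at most `m + |T|` pairs.
-/

section LexPreference
variable {C : Type*} [DecidableEq C] {l : List C} {S T : Finset C}

lemma not_lexPrefers_of_subset (h : S ⊆ T) : ¬ lexPrefers l S T := by
  rintro ⟨c, hc, -⟩
  simp [sdiff_eq_empty_iff_subset.2 h] at hc

lemma lexPrefers_of_ssubset (h : S ⊂ T) : lexPrefers l T S := by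
  obtain ⟨c, hc, hmin⟩ :=
    exists_min_image _ (l.idxOf ·) (sdiff_nonempty.2 (not_subset_of_ssubset h))
  refine ⟨c, hc, fun d hd => hmin d ?_⟩
  rwa [sdiff_eq_empty_iff_subset.2 h.subset, union_empty] at hd

lemma lexPrefers_iff_exists_forall_lt (hS : ∀ c ∈ S, c ∈ l) :
    lexPrefers l S T ↔ ∃ c ∈ S \ T, ∀ d ∈ T \ S, l.idxOf c < l.idxOf d := by
  constructor
  · rintro ⟨c, hc, hmin⟩
    refine ⟨c, hc, fun d hd => (hmin d (mem_union_right _ hd)).lt_of_ne fun hcd => ?_⟩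
    have := (List.idxOf_inj (hS c (mem_sdiff.1 hc).1)).1 hcd
    exact (mem_sdiff.1 hc).2 (this ▸ (mem_sdiff.1 hd).1)
  · rintro ⟨c, hc, hlt⟩
    obtain ⟨c', hc', hmin⟩ :=
      exists_min_image ((S \ T) ∪ (T \ S)) (l.idxOf ·) ⟨c, mem_union_left _ hc⟩
    rcases mem_union.1 hc' with hc' | hc'
    · exact ⟨c', hc', hmin⟩
    · exact absurd (hmin c (mem_union_left _ hc)) (not_le.2 (hlt c' hc'))

/-- Lexicographic preference w.r.t. `l` is the colex order on positions in `l`, read backwards. -/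
def lexKey (l : List C) (S : Finset C) : Colex (Finset ℕᵒᵈ) :=
  toColex (S.image fun c => OrderDual.toDual (l.idxOf c))

lemma lexPrefers_iff_lexKey_lt (hS : ∀ c ∈ S, c ∈ l) (hT : ∀ c ∈ T, c ∈ l) :
    lexPrefers l S T ↔ lexKey l T < lexKey l S := by
  have key : ∀ {U : Finset C}, (∀ c ∈ U, c ∈ l) → ∀ c,
      OrderDual.toDual (l.idxOf c) ∈ U.image (fun c => OrderDual.toDual (l.idxOf c)) ↔ c ∈ U := by
    intro U hU c
    refine ⟨fun h => ?_, fun h => mem_image_of_mem _ h⟩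
    obtain ⟨d, hd, hdc⟩ := mem_image.1 h
    exact (List.idxOf_inj (hU d hd)).1 hdc ▸ hd
  rw [lexPrefers_iff_exists_forall_lt hS, lexKey, lexKey,
    Colex.toColex_lt_toColex_iff_exists_forall_lt]
  simp only [exists_mem_image, forall_mem_image, key hS, key hT, OrderDual.toDual_lt_toDual,
    mem_sdiff, and_imp, and_assoc]

lemma eq_toFinset_of_lexKey_le (hS : ∀ c ∈ S, c ∈ l) (h : lexKey l l.toFinset ≤ lexKey l S) :
    S = l.toFinset := by
  by_contra hne
  have hss : S ⊂ l.toFinset :=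
    ssubset_of_subset_of_ne (fun c hc => List.mem_toFinset.2 (hS c hc)) hne
  exact not_lt.2 h ((lexPrefers_iff_lexKey_lt (fun c => List.mem_toFinset.1) hS).1
    (lexPrefers_of_ssubset hss))

end LexPreference

section Matching
variable {A C : Type*} [DecidableEq A] [DecidableEq C]

lemma mem_bundle {M : Finset (A × C)} {a : A} {c : C} : c ∈ bundle M a ↔ (a, c) ∈ M := by
  simp [bundle]

lemma bundle_mono {M M' : Finset (A × C)} (h : M ⊆ M') (a : A) : bundle M a ⊆ bundle M' a :=
  fun _ hc => mem_bundle.2 (h (mem_bundle.1 hc))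

lemma bundle_insert_self (M : Finset (A × C)) (a : A) (c : C) :
    bundle (insert (a, c) M) a = insert c (bundle M a) := by
  ext; simp [mem_bundle]

lemma bundle_insert_of_ne (M : Finset (A × C)) {a b : A} (c : C) (h : b ≠ a) :
    bundle (insert (a, c) M) b = bundle M b := by
  ext; simp [mem_bundle, h]

lemma bundle_image_graph (f : C → A) (T : Finset C) (a : A) :
    bundle (T.image fun c => (f c, c)) a = T.filter (f · = a) := by
  ext c; simp [mem_bundle, and_comm]

lemma isMatching_iff_injOn_snd {pref : A → List C} {qA : A → ℕ} {prereq : A → C → C → Prop}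
    {M : Finset (A × C)} :
    IsMatching pref qA (fun _ => 1) prereq M ↔
      (∀ a, IsFeasible pref qA prereq a (bundle M a)) ∧ Set.InjOn Prod.snd (M : Set (A × C)) := by
  refine and_congr_right fun _ => ⟨fun h p hp q hq hpq => ?_, fun h c => ?_⟩
  · exact card_le_one.1 (h p.2) p (mem_filter.2 ⟨hp, rfl⟩) q (mem_filter.2 ⟨hq, hpq.symm⟩)
  · exact card_le_one.2 fun p hp q hq =>
      h (mem_filter.1 hp).1 (mem_filter.1 hq).1 ((mem_filter.1 hp).2.trans (mem_filter.1 hq).2.symm)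

lemma dominates_of_ssubset (pref : A → List C) {M M' : Finset (A × C)} (h : M ⊂ M') :
    Dominates pref M' M := by
  obtain ⟨⟨a, c⟩, hM', hM⟩ := exists_of_ssubset h
  refine ⟨⟨a, lexPrefers_of_ssubset ?_⟩, fun b => not_lexPrefers_of_subset (bundle_mono h.subset b)⟩
  exact (ssubset_iff_of_subset (bundle_mono h.subset a)).2
    ⟨c, mem_bundle.2 hM', fun hc => hM (mem_bundle.1 hc)⟩

variable {pref : A → List C} {qA : A → ℕ} {qC : C → ℕ} {prereq : A → C → C → Prop}

lemma ParetoOptimal.not_isMatching_of_ssubset {M M' : Finset (A × C)}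
    (hM : ParetoOptimal pref qA qC prereq M) (h : M ⊂ M') : ¬ IsMatching pref qA qC prereq M' :=
  fun hM' => hM.2 M' hM' (dominates_of_ssubset pref h)

theorem IsMatching.exists_paretoOptimal [Fintype A] [Fintype C] {M₀ : Finset (A × C)}
    (h₀ : IsMatching pref qA qC prereq M₀) :
    ∃ M, ParetoOptimal pref qA qC prereq M ∧
      ∀ a, lexKey (pref a) (bundle M₀ a) ≤ lexKey (pref a) (bundle M a) := by
  classical
  let key : Finset (A × C) → A → Colex (Finset ℕᵒᵈ) := fun M a => lexKey (pref a) (bundle M a)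
  obtain ⟨M, hM, hmax⟩ := exists_maximalFor key
    (univ.filter fun M => IsMatching pref qA qC prereq M ∧ key M₀ ≤ key M) ⟨M₀, by simp [h₀]⟩
  obtain ⟨hMm, hM₀⟩ := (mem_filter.1 hM).2
  refine ⟨M, ⟨hMm, fun M' hM' ⟨⟨a, ha⟩, hno⟩ => ?_⟩, hM₀⟩
  have hle : key M ≤ key M' := fun b => not_lt.1 fun hlt =>
    hno b ((lexPrefers_iff_lexKey_lt (hMm.1 b).1 (hM'.1 b).1).2 hlt)
  have hback : key M' ≤ key M := hmax (mem_filter.2 ⟨mem_univ _, hM', hM₀.trans hle⟩) hle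
  exact not_le.2 ((lexPrefers_iff_lexKey_lt (hM'.1 a).1 (hMm.1 a).1).1 ha) (hback a)

end Matching

lemma card_le_length_of_forall_mem {C : Type*} [DecidableEq C] {l : List C} {S : Finset C}
    (h : ∀ c ∈ S, c ∈ l) : S.card ≤ l.length :=
  (card_le_card fun c hc => List.mem_toFinset.2 (h c hc)).trans l.toFinset_card_le

namespace CubicCAPR
variable {n m : ℕ} {ep : Fin m → Fin n × Fin n} {elist : Fin n → List (Fin m)}

def pref (elist : Fin n → List (Fin m)) (i : Fin n) : List (Fin n ⊕ Fin m) :=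
  Sum.inl i :: (elist i).map Sum.inr

def prereq (ep : Fin m → Fin n × Fin n) (_ : Fin n) (c c' : Fin n ⊕ Fin m) : Prop :=
  ∃ (v : Fin n) (j : Fin m), c = Sum.inl v ∧ c' = Sum.inr j ∧ Incid ep v j

abbrev IsInstanceMatching (ep : Fin m → Fin n × Fin n) (elist : Fin n → List (Fin m))
    (M : Finset (Fin n × (Fin n ⊕ Fin m))) : Prop :=
  IsMatching (pref elist) (fun _ => 4) (fun _ => 1) (prereq ep) M

def IsIndepSet (ep : Fin m → Fin n × Fin n) (S : Finset (Fin n)) : Prop :=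
  ∀ j, ¬ ((ep j).1 ∈ S ∧ (ep j).2 ∈ S)

lemma length_elist {i : Fin n} (hnodup : (elist i).Nodup) (hE : ∀ j, j ∈ elist i ↔ Incid ep i j)
    (hcubic : (univ.filter fun j => Incid ep i j).card = 3) : (elist i).length = 3 := by
  rw [← List.toFinset_card_of_nodup hnodup, ← hcubic]
  congr 1
  ext j
  simp [hE]

lemma inl_mem_pref {v i : Fin n} : Sum.inl v ∈ pref elist i ↔ v = i := by
  simp [pref]

lemma inr_mem_pref (hE : ∀ i j, j ∈ elist i ↔ Incid ep i j) {i : Fin n} {j : Fin m} :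
    Sum.inr j ∈ pref elist i ↔ Incid ep i j := by
  simp [pref, hE]

/-- The capacity `4` of an applicant is the length of her list, so it never binds. -/
lemma isFeasible_iff (hlen : ∀ i, (elist i).length = 3) {a : Fin n}
    {S : Finset (Fin n ⊕ Fin m)} :
    IsFeasible (pref elist) (fun _ => 4) (prereq ep) a S ↔
      (∀ c ∈ S, c ∈ pref elist a) ∧ ∀ v j, Sum.inl v ∈ S → Incid ep v j → Sum.inr j ∈ S := by
  refine ⟨fun h => ⟨h.1, fun v j hv hj => h.2.2 _ hv _ ⟨v, j, rfl, rfl, hj⟩⟩,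
    fun h => ⟨h.1, ?_, ?_⟩⟩
  · simpa [pref, hlen] using card_le_length_of_forall_mem h.1
  · rintro c hc c' ⟨v, j, rfl, rfl, hj⟩
    exact h.2 v j hc hj

def takenVertices (M : Finset (Fin n × (Fin n ⊕ Fin m))) : Finset (Fin n) :=
  univ.filter fun v => (v, Sum.inl v) ∈ M

lemma eq_of_inl_mem {M : Finset (Fin n × (Fin n ⊕ Fin m))} (hM : IsInstanceMatching ep elist M)
    {a v : Fin n} (h : (a, Sum.inl v) ∈ M) : v = a :=
  inl_mem_pref.1 ((hM.1 a).1 _ (mem_bundle.2 h))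

lemma isIndepSet_takenVertices (hloop : ∀ j, (ep j).1 ≠ (ep j).2)
    {M : Finset (Fin n × (Fin n ⊕ Fin m))} (hM : IsInstanceMatching ep elist M) :
    IsIndepSet ep (takenVertices M) := by
  rintro j ⟨h₁, h₂⟩
  have hinr : ∀ v ∈ takenVertices M, Incid ep v j → (v, Sum.inr j) ∈ M := fun v hv hj =>
    mem_bundle.1 ((hM.1 v).2.2 _ (mem_bundle.2 (mem_filter.1 hv).2) _ ⟨v, j, rfl, rfl, hj⟩)
  have := (isMatching_iff_injOn_snd.1 hM).2 (hinr _ h₁ (Or.inl rfl)) (hinr _ h₂ (Or.inr rfl)) rfl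
  exact hloop j (Prod.ext_iff.1 this).1

lemma card_le_card_takenVertices_add {M : Finset (Fin n × (Fin n ⊕ Fin m))}
    (hM : IsInstanceMatching ep elist M) : M.card ≤ (takenVertices M).card + m := by
  have hsub : M.image Prod.snd ⊆ (takenVertices M).disjSum univ := by
    rintro (v | j) hc
    · obtain ⟨⟨a, _⟩, hp, rfl⟩ := mem_image.1 hc
      rw [inl_mem_disjSum, takenVertices, mem_filter]
      exact ⟨mem_univ _, eq_of_inl_mem hM hp ▸ hp⟩
    · simp
  calc M.card = (M.image Prod.snd).card :=
        (card_image_of_injOn (isMatching_iff_injOn_snd.1 hM).2).symm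
    _ ≤ ((takenVertices M).disjSum univ).card := card_le_card hsub
    _ = (takenVertices M).card + m := by simp [card_disjSum]

section FromIndepSet
variable {S : Finset (Fin n)}

def owner (ep : Fin m → Fin n × Fin n) (S : Finset (Fin n)) (j : Fin m) : Fin n :=
  if (ep j).2 ∈ S then (ep j).2 else (ep j).1

lemma incid_owner (j : Fin m) : Incid ep (owner ep S j) j := by
  unfold owner; split_ifs <;> simp [Incid]

lemma owner_eq (hS : IsIndepSet ep S) {v : Fin n} {j : Fin m} (hv : v ∈ S) (hj : Incid ep v j) :
    owner ep S j = v := by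
  unfold owner
  rcases hj with rfl | rfl
  · exact if_neg fun h => hS j ⟨hv, h⟩
  · exact if_pos hv

def assignment (ep : Fin m → Fin n × Fin n) (S : Finset (Fin n)) :
    Finset (Fin n × (Fin n ⊕ Fin m)) :=
  (S.disjSum univ).image fun c => (Sum.elim id (owner ep S) c, c)

lemma inl_mem_bundle_assignment {v a : Fin n} :
    Sum.inl v ∈ bundle (assignment ep S) a ↔ v ∈ S ∧ v = a := by
  simp [assignment, bundle_image_graph]

lemma inr_mem_bundle_assignment {j : Fin m} {a : Fin n} :
    Sum.inr j ∈ bundle (assignment ep S) a ↔ owner ep S j = a := by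
  simp [assignment, bundle_image_graph]

lemma isInstanceMatching_assignment (hE : ∀ i j, j ∈ elist i ↔ Incid ep i j)
    (hlen : ∀ i, (elist i).length = 3) (hS : IsIndepSet ep S) :
    IsInstanceMatching ep elist (assignment ep S) := by
  refine isMatching_iff_injOn_snd.2 ⟨fun a => (isFeasible_iff hlen).2 ⟨?_, ?_⟩, ?_⟩
  · rintro (v | j) hc
    · exact inl_mem_pref.2 (inl_mem_bundle_assignment.1 hc).2
    · exact (inr_mem_pref hE).2 (inr_mem_bundle_assignment.1 hc ▸ incid_owner j)
  · intro v j hv hj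
    obtain ⟨hvS, rfl⟩ := inl_mem_bundle_assignment.1 hv
    exact inr_mem_bundle_assignment.2 (owner_eq hS hvS hj)
  · rintro _ hp _ hq h
    obtain ⟨c, -, rfl⟩ := mem_image.1 hp
    obtain ⟨d, -, rfl⟩ := mem_image.1 hq
    cases h
    rfl

lemma bundle_assignment_of_mem (hE : ∀ i j, j ∈ elist i ↔ Incid ep i j) (hS : IsIndepSet ep S)
    {v : Fin n} (hv : v ∈ S) : bundle (assignment ep S) v = (pref elist v).toFinset := by
  ext (w | j)
  · rw [inl_mem_bundle_assignment, List.mem_toFinset, inl_mem_pref]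
    exact ⟨And.right, fun h => ⟨h ▸ hv, h⟩⟩
  · rw [inr_mem_bundle_assignment, List.mem_toFinset, inr_mem_pref hE]
    exact ⟨fun h => h ▸ incid_owner j, owner_eq hS hv⟩

lemma isInstanceMatching_insert (hE : ∀ i j, j ∈ elist i ↔ Incid ep i j)
    (hlen : ∀ i, (elist i).length = 3) {M : Finset (Fin n × (Fin n ⊕ Fin m))}
    (hM : IsInstanceMatching ep elist M) {u : Fin n} {j : Fin m}
    (hj : Sum.inr j ∉ M.image Prod.snd) (hu : Incid ep u j) :
    IsInstanceMatching ep elist (insert (u, Sum.inr j) M) := by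
  have hnotMem : (u, Sum.inr j) ∉ M := fun h => hj (mem_image_of_mem _ h)
  replace hM := isMatching_iff_injOn_snd.1 hM
  refine isMatching_iff_injOn_snd.2 ⟨fun a => ?_, ?_⟩
  · by_cases hau : a = u
    · subst hau
      have hfeas := (isFeasible_iff hlen).1 (hM.1 a)
      rw [bundle_insert_self, isFeasible_iff hlen]
      refine ⟨forall_mem_insert _ _ _ |>.2 ⟨(inr_mem_pref hE).2 hu, hfeas.1⟩, fun v k hv hk => ?_⟩
      exact mem_insert_of_mem (hfeas.2 v k ((mem_insert.1 hv).resolve_left Sum.inl_ne_inr) hk)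
    · rw [bundle_insert_of_ne _ _ hau]
      exact hM.1 a
  · rw [coe_insert, Set.injOn_insert (by exact_mod_cast hnotMem)]
    exact ⟨hM.2, by simpa using hj⟩

lemma inr_mem_image_snd_of_paretoOptimal (hE : ∀ i j, j ∈ elist i ↔ Incid ep i j)
    (hlen : ∀ i, (elist i).length = 3) {M : Finset (Fin n × (Fin n ⊕ Fin m))}
    (hM : ParetoOptimal (pref elist) (fun _ => 4) (fun _ => 1) (prereq ep) M) (j : Fin m) :
    Sum.inr j ∈ M.image Prod.snd := by
  by_contra hj
  exact hM.not_isMatching_of_ssubset (ssubset_insert fun h => hj (mem_image_of_mem _ h))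
    (isInstanceMatching_insert hE hlen hM.1 hj (u := (ep j).1) (Or.inl rfl))

theorem exists_paretoOptimal_card_ge (hE : ∀ i j, j ∈ elist i ↔ Incid ep i j)
    (hlen : ∀ i, (elist i).length = 3) (hS : IsIndepSet ep S) :
    ∃ M, ParetoOptimal (pref elist) (fun _ => 4) (fun _ => 1) (prereq ep) M ∧
      m + S.card ≤ M.card := by
  obtain ⟨M, hM, hge⟩ := (isInstanceMatching_assignment hE hlen hS).exists_paretoOptimal
  have hfull : ∀ v ∈ S, Sum.inl v ∈ M.image Prod.snd := fun v hv => by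
    have hle := hge v
    rw [bundle_assignment_of_mem hE hS hv] at hle
    have := eq_toFinset_of_lexKey_le (hM.1.1 v).1 hle
    exact mem_image_of_mem _ (mem_bundle.1 (this ▸ List.mem_toFinset.2 (List.mem_cons_self ..)))
  have hsub : S.disjSum univ ⊆ M.image Prod.snd := by
    rintro (v | j) hc
    · exact hfull v (inl_mem_disjSum.1 hc)
    · exact inr_mem_image_snd_of_paretoOptimal hE hlen hM j
  refine ⟨M, hM, ?_⟩
  calc m + S.card = (S.disjSum univ).card := by simp [card_disjSum, add_comm]
    _ ≤ (M.image Prod.snd).card := card_le_card hsub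
    _ ≤ M.card := card_image_le

end FromIndepSet

end CubicCAPR

open CubicCAPR in
theorem cubic_indep_set_iff_large_pom_general {n m : ℕ}
    (ep : Fin m → Fin n × Fin n)
    (hloop : ∀ j, (ep j).1 ≠ (ep j).2)
    (hcubic : ∀ v : Fin n, (Finset.univ.filter fun j => Incid ep v j).card = 3)
    (elist : Fin n → List (Fin m))
    (helist : ∀ i, (elist i).Nodup ∧ ∀ j : Fin m, j ∈ elist i ↔ Incid ep i j)
    (K : ℕ) :
    (∃ S : Finset (Fin n),
        (∀ j : Fin m, ¬ ((ep j).1 ∈ S ∧ (ep j).2 ∈ S)) ∧ K ≤ S.card) ↔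
      ∃ M : Finset (Fin n × ((Fin n) ⊕ (Fin m))),
        ParetoOptimal
          (fun i => Sum.inl i :: (elist i).map Sum.inr)
          (fun _ => 4) (fun _ => 1)
          (fun _ c c' => ∃ (v : Fin n) (j : Fin m),
            c = Sum.inl v ∧ c' = Sum.inr j ∧ Incid ep v j)
          M ∧
        m + K ≤ M.card := by
  have hE : ∀ i j, j ∈ elist i ↔ Incid ep i j := fun i => (helist i).2
  have hlen : ∀ i, (elist i).length = 3 := fun i =>
    length_elist (helist i).1 (hE i) (hcubic i)
  constructor
  · rintro ⟨S, hS, hK⟩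
    obtain ⟨M, hM, hcard⟩ := exists_paretoOptimal_card_ge hE hlen hS
    exact ⟨M, hM, by omega⟩
  · rintro ⟨M, hM, hcard⟩
    have := card_le_card_takenVertices_add hM.1
    exact ⟨takenVertices M, isIndepSet_takenVertices hloop hM.1, by omega⟩

/-- let `G` be a cubic graph with vertices `Fin n` and edges
`e_1, …, e_m` given by their endpoints `ep` (loopless, pairwise distinct as
unordered pairs, every vertex incident to exactly 3 edges).  The CAPR instance `I`
with lexicographic preferences has one applicant per vertex, each of capacity 4;
one course per vertex and per edge, each of capacity 1; the preference list of
`a_i` is `v_i` followed by the three courses of `E_i` in some fixed order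
(`elist i`); the prerequisites (identical for all applicants) are `v → e` for
every vertex `v` and incident edge `e`.  Then for every positive integer `K`,
`G` has an independent set of size at least `K` iff `I` admits a Pareto optimal
matching of cardinality at least `m + K`. -/
theorem cubic_indep_set_iff_large_pom {n m : ℕ}
    (ep : Fin m → Fin n × Fin n)
    (hloop : ∀ j, (ep j).1 ≠ (ep j).2)
    (hdist : Function.Injective fun j => s((ep j).1, (ep j).2))
    (hcubic : ∀ v : Fin n, (Finset.univ.filter fun j => Incid ep v j).card = 3)
    (elist : Fin n → List (Fin m))
    (helist : ∀ i, (elist i).Nodup ∧ ∀ j : Fin m, j ∈ elist i ↔ Incid ep i j)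
    (K : ℕ) (hK : 0 < K) :
    (∃ S : Finset (Fin n),
        (∀ j : Fin m, ¬ ((ep j).1 ∈ S ∧ (ep j).2 ∈ S)) ∧ K ≤ S.card) ↔
      ∃ M : Finset (Fin n × ((Fin n) ⊕ (Fin m))),
        ParetoOptimal
          (fun i => Sum.inl i :: (elist i).map Sum.inr)
          (fun _ => 4) (fun _ => 1)
          (fun _ c c' => ∃ (v : Fin n) (j : Fin m),
            c = Sum.inl v ∧ c' = Sum.inr j ∧ Incid ep v j)
          M ∧
        m + K ≤ M.card :=
  cubic_indep_set_iff_large_pom_general ep hloop hcubic elist helist K
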